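/- Let X be any n×p real matrix and let R satisfy 1 ≤ R ≤ min(n,p) and R < n. Suppose each loss function ρ_ij: ℝ → [0,∞) is symmetric and satisfies ρ_ij(z) → ∞ as |z| → ∞, and the penalty functions P₁, P₂ are bounded above on the unit spheres S^{n−1} and S^{p−1}, respectively. Then for the ELSVD left singular subspace function U_R^ρ (for any selection of minimizers), there exists k ≤ R+1 such that (k,1) ∈ BP(U_R^ρ;X). In particular, bp_row(U_R^ρ;X) ≤ R+1 and bp_col(U_R^ρ;X) = 1. -/

import Mathlib

noncomputable section
open scoped BigOperators
open Matrix

abbrev E (k : ℕ) := EuclideanSpace ℝ (Fin k)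

noncomputable def canonAngle {k : ℕ} (V W : Submodule ℝ (E k)) : ℝ :=
  Real.arccos (sInf {r : ℝ | ∃ w ∈ W, ‖w‖ = 1 ∧
    r = ‖(V.orthogonalProjectionOnto w : E k)‖})

variable {n p m : ℕ}

def BlockCorrupt (X Z : Matrix (Fin n) (Fin p) ℝ) (k l : ℕ) : Prop :=
  ∃ (I : Finset (Fin n)) (J : Finset (Fin p)), I.card = k ∧ J.card = l ∧
    ∀ i j, (i ∉ I ∨ j ∉ J) → Z i j = X i j

def RowCorrupt (X Z : Matrix (Fin n) (Fin p) ℝ) (k : ℕ) : Prop :=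
  ∃ I : Finset (Fin n), I.card = k ∧ ∀ i ∉ I, ∀ j, Z i j = X i j

def ColCorrupt (X Z : Matrix (Fin n) (Fin p) ℝ) (l : ℕ) : Prop :=
  ∃ J : Finset (Fin p), J.card = l ∧ ∀ j ∉ J, ∀ i, Z i j = X i j

def BreaksDownBlock (V : Matrix (Fin n) (Fin p) ℝ → Submodule ℝ (E m))
    (X : Matrix (Fin n) (Fin p) ℝ) (k l : ℕ) : Prop :=
  sSup {d : ℝ | ∃ Z, BlockCorrupt X Z k l ∧ d = canonAngle (V Z) (V X)} = Real.pi / 2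

def BreaksDownRow (V : Matrix (Fin n) (Fin p) ℝ → Submodule ℝ (E m))
    (X : Matrix (Fin n) (Fin p) ℝ) (k : ℕ) : Prop :=
  sSup {d : ℝ | ∃ Z, RowCorrupt X Z k ∧ d = canonAngle (V Z) (V X)} = Real.pi / 2

def BreaksDownCol (V : Matrix (Fin n) (Fin p) ℝ → Submodule ℝ (E m))
    (X : Matrix (Fin n) (Fin p) ℝ) (l : ℕ) : Prop :=
  sSup {d : ℝ | ∃ Z, ColCorrupt X Z l ∧ d = canonAngle (V Z) (V X)} = Real.pi / 2

noncomputable def bpRow (V : Matrix (Fin n) (Fin p) ℝ → Submodule ℝ (E m))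
    (X : Matrix (Fin n) (Fin p) ℝ) : ℕ :=
  sInf {k : ℕ | 1 ≤ k ∧ k ≤ n ∧ BreaksDownRow V X k}

noncomputable def bpCol (V : Matrix (Fin n) (Fin p) ℝ → Submodule ℝ (E m))
    (X : Matrix (Fin n) (Fin p) ℝ) : ℕ :=
  sInf {l : ℕ | 1 ≤ l ∧ l ≤ p ∧ BreaksDownCol V X l}

def IsBP (V : Matrix (Fin n) (Fin p) ℝ → Submodule ℝ (E m))
    (X : Matrix (Fin n) (Fin p) ℝ) (i j : ℕ) : Prop :=
  1 ≤ i ∧ i ≤ n ∧ 1 ≤ j ∧ j ≤ p ∧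
  (∀ k l, i ≤ k → k ≤ n → j ≤ l → l ≤ p → BreaksDownBlock V X k l) ∧
  (∀ k l, 1 ≤ k → 1 ≤ l → k ≤ i → l ≤ j → (k, l) ≠ (i, j) → ¬ BreaksDownBlock V X k l)

/-- The ELSVD objective `ρ(Y - d·u·vᵀ) + P₁(u) + P₂(v)`. -/
noncomputable def elsvdObj {n p : ℕ} (ρ : Fin n → Fin p → ℝ → ℝ)
    (P1 : E n → ℝ) (P2 : E p → ℝ) (Y : Matrix (Fin n) (Fin p) ℝ)
    (d : ℝ) (u : E n) (v : E p) : ℝ :=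
  (∑ i, ∑ j, ρ i j (Y i j - d * u i * v j)) + P1 u + P2 v

/-- `(d, u, v)` is a sequence of ELSVD triples for `Y`: for each `r`, the triple
`(d r, u r, v r)` minimizes the ELSVD objective over `d' ≥ 0` and unit vectors `u'`, `v'`
orthogonal to the previously obtained singular vectors. -/
def IsELSVD {n p : ℕ} (ρ : Fin n → Fin p → ℝ → ℝ) (P1 : E n → ℝ) (P2 : E p → ℝ)
    (R : ℕ) (Y : Matrix (Fin n) (Fin p) ℝ)
    (d : Fin R → ℝ) (u : Fin R → E n) (v : Fin R → E p) : Prop :=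
  ∀ r : Fin R,
    0 ≤ d r ∧ ‖u r‖ = 1 ∧ ‖v r‖ = 1 ∧
    (∀ s : Fin R, s < r → (inner ℝ (u s) (u r) : ℝ) = 0 ∧ (inner ℝ (v s) (v r) : ℝ) = 0) ∧
    ∀ (d' : ℝ) (u' : E n) (v' : E p), 0 ≤ d' → ‖u'‖ = 1 → ‖v'‖ = 1 →
      (∀ s : Fin R, s < r → (inner ℝ (u s) u' : ℝ) = 0 ∧ (inner ℝ (v s) v' : ℝ) = 0) →
      elsvdObj ρ P1 P2 Y (d r) (u r) (v r) ≤ elsvdObj ρ P1 P2 Y d' u' v'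

/-! Replace `R + 1` entries of one column `j₀` of `X` by `M • c`, where `c` is a unit vector
supported on those rows and orthogonal to `U X` (it exists because `dim U X = R < R + 1`).
The rank-one candidate `(M, c, e_{j₀})` has an objective that does not depend on `M`, and the
penalties are bounded below on the spheres (compare the first ELSVD triple of `X` with `d = 0`).
So every residual of the first ELSVD triple of the corrupted matrix lies in a fixed sublevel set
of the coercive `ρ`, whence `‖t • u₁ - M • c‖ ≤ s` with `s` independent of `M`: for large `M`
the first new left vector `u₁` is almost `± c`. A unit `w ∈ U X` orthogonal to the other `R - 1`
new left vectors projects onto the new subspace with norm `|⟪u₁, w⟫| ≈ |⟪c, w⟫| = 0`, so the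
largest canonical angle tends to `π / 2`. Breakdown at `(R + 1, 1)` then propagates to all larger
blocks, in particular to `R + 1` full rows and to one full column. -/

open Filter Topology Module

section InnerProductGeometry

variable {𝕜 F : Type*} [RCLike 𝕜] [NormedAddCommGroup F] [InnerProductSpace 𝕜 F]

lemma exists_mem_orthogonal_norm_eq_one [FiniteDimensional 𝕜 F] {A B : Submodule 𝕜 F}
    (h : finrank 𝕜 B < finrank 𝕜 A) : ∃ w ∈ A, w ∈ Bᗮ ∧ ‖w‖ = 1 := by
  have hsup := Submodule.finrank_sup_add_finrank_inf_eq A Bᗮ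
  have hle := Submodule.finrank_le (A ⊔ Bᗮ)
  have hB := B.finrank_add_finrank_orthogonal
  have hne : A ⊓ Bᗮ ≠ ⊥ := fun h0 => by
    rw [h0, finrank_bot] at hsup
    omega
  obtain ⟨x, hx, hx0⟩ := Submodule.exists_mem_ne_zero_of_ne_bot hne
  rw [Submodule.mem_inf] at hx
  exact ⟨(‖x‖ : 𝕜)⁻¹ • x, A.smul_mem _ hx.1, Bᗮ.smul_mem _ hx.2, norm_smul_inv_norm hx0⟩

lemma Orthonormal.starProjection_span_range {ι : Type*} {u : ι → F} (hu : Orthonormal 𝕜 u)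
    [(Submodule.span 𝕜 (Set.range u)).HasOrthogonalProjection] {i₀ : ι} {w : F}
    (hw : ∀ i ≠ i₀, inner 𝕜 (u i) w = 0) :
    (Submodule.span 𝕜 (Set.range u)).starProjection w = inner 𝕜 (u i₀) w • u i₀ := by
  refine Submodule.eq_starProjection_of_mem_of_inner_eq_zero
    (Submodule.smul_mem _ _ (Submodule.subset_span ⟨i₀, rfl⟩)) fun x hx => ?_
  rw [← Submodule.mem_orthogonal_singleton_iff_inner_right]
  refine (Submodule.span_le.2 ?_) hx
  rintro _ ⟨i, rfl⟩
  rw [SetLike.mem_coe, Submodule.mem_orthogonal_singleton_iff_inner_right, inner_sub_left,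
    inner_smul_left]
  obtain rfl | hi := eq_or_ne i i₀
  · rw [← inner_conj_symm w, inner_self_eq_norm_sq_to_K, hu.1 i]
    simp
  · rw [← inner_conj_symm w, hw i hi, hu.inner_eq_zero hi.symm]
    simp

lemma exists_norm_starProjection_span_eq [FiniteDimensional 𝕜 F] {ι : Type*} [Fintype ι]
    [DecidableEq ι] {u : ι → F} (hu : Orthonormal 𝕜 u) (i₀ : ι) {W : Submodule 𝕜 F}
    (hW : Fintype.card ι ≤ finrank 𝕜 W) :
    ∃ w ∈ W, ‖w‖ = 1 ∧
      ‖(Submodule.span 𝕜 (Set.range u)).starProjection w‖ = ‖inner 𝕜 (u i₀) w‖ := by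
  have hcard : finrank 𝕜 (Submodule.span 𝕜 (Set.range fun i : {i // i ≠ i₀} => u i)) <
      finrank 𝕜 W :=
    ((finrank_range_le_card _).trans_lt (Fintype.card_subtype_lt (x := i₀) (by simp))).trans_le hW
  obtain ⟨w, hwW, hwo, hw1⟩ := exists_mem_orthogonal_norm_eq_one hcard
  refine ⟨w, hwW, hw1, ?_⟩
  rw [hu.starProjection_span_range fun i hi => Submodule.inner_right_of_mem_orthogonal
      (Submodule.subset_span (Set.mem_range_self (⟨i, hi⟩ : {i // i ≠ i₀}))) hwo,
    norm_smul, hu.1 i₀, mul_one]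

lemma exists_norm_eq_one_mem_orthogonal_of_support {ι : Type*} [Fintype ι] [DecidableEq ι]
    {K : Submodule 𝕜 (EuclideanSpace 𝕜 ι)} (I : Finset ι) (h : finrank 𝕜 K < I.card) :
    ∃ c ∈ Kᗮ, ‖c‖ = 1 ∧ ∀ i ∉ I, c i = 0 := by
  set S :=
    Submodule.span 𝕜 (Set.range fun i : {i // i ∉ I} => EuclideanSpace.single (i : ι) (1 : 𝕜))
  have hS : I.card ≤ finrank 𝕜 Sᗮ := by
    have h1 : finrank 𝕜 S ≤ Fintype.card {i // i ∉ I} := finrank_range_le_card _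
    have h2 := S.finrank_add_finrank_orthogonal
    rw [finrank_euclideanSpace] at h2
    rw [Fintype.card_subtype_compl, Fintype.card_coe] at h1
    have := Finset.card_le_univ I
    omega
  obtain ⟨c, hcS, hcK, hc1⟩ := exists_mem_orthogonal_norm_eq_one (h.trans_le hS)
  refine ⟨c, hcK, hc1, fun i hi => ?_⟩
  have := Submodule.inner_right_of_mem_orthogonal
    (Submodule.subset_span (Set.mem_range_self (⟨i, hi⟩ : {i // i ∉ I}))) hcS
  rwa [EuclideanSpace.inner_single_left, map_one, one_mul] at this

end InnerProductGeometry

lemma abs_inner_le_of_norm_smul_sub_smul_le {F : Type*} [NormedAddCommGroup F]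
    [InnerProductSpace ℝ F] {u c w : F} {t M s δ : ℝ} (hu : ‖u‖ = 1) (hc : ‖c‖ = 1)
    (hw : ‖w‖ = 1) (hcw : inner ℝ c w = 0) (hδ : 0 < δ) (hM : s + s / δ < M)
    (h : ‖t • u - M • c‖ ≤ s) : |inner ℝ u w| ≤ δ := by
  have hinner : |t| * |inner ℝ u w| ≤ s := by
    have : inner ℝ (t • u - M • c) w = t * inner ℝ u w := by
      rw [inner_sub_left, real_inner_smul_left, real_inner_smul_left, hcw, mul_zero, sub_zero]
    calc |t| * |inner ℝ u w| = |inner ℝ (t • u - M • c) w| := by rw [this, abs_mul]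
      _ ≤ ‖t • u - M • c‖ * ‖w‖ := abs_real_inner_le_norm _ _
      _ ≤ s := by rwa [hw, mul_one]
  have ht : s / δ < |t| := by
    have := norm_sub_norm_le (M • c) (t • u)
    rw [norm_sub_rev, norm_smul, norm_smul, hc, hu, mul_one, mul_one, Real.norm_eq_abs,
      Real.norm_eq_abs] at this
    linarith [le_abs_self M]
  rw [div_lt_iff₀ hδ] at ht
  nlinarith [abs_nonneg (inner ℝ u w), abs_nonneg t]

lemma isBounded_setOf_le_of_tendsto_cocompact {α : Type*} [PseudoMetricSpace α] {f : α → ℝ}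
    (hf : Tendsto f (cocompact α) atTop) (K : ℝ) : Bornology.IsBounded {x | f x ≤ K} := by
  rw [Bornology.isBounded_def]
  filter_upwards [Metric.cobounded_le_cocompact (hf.eventually_gt_atTop K)] with x hx
  exact not_le.2 hx

lemma exists_norm_le_of_tendsto_cocompact {ι : Type*} [Fintype ι] {f : ι → ℝ → ℝ}
    (hf : ∀ i, Tendsto (f i) (cocompact ℝ) atTop) (K : ℝ) :
    ∃ S, ∀ y : EuclideanSpace ℝ ι, (∀ i, f i (y i) ≤ K) → ‖y‖ ≤ S := by
  have hbdd : Bornology.IsBounded {y : EuclideanSpace ℝ ι | ∀ i, f i (y i) ≤ K} := by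
    rw [Bornology.isBounded_induced]
    refine (Bornology.IsBounded.pi fun i =>
      isBounded_setOf_le_of_tendsto_cocompact (hf i) K).subset ?_
    rintro _ ⟨y, hy, rfl⟩ i -
    exact hy i
  obtain ⟨S, hS⟩ := isBounded_iff_forall_norm_le.1 hbdd
  exact ⟨S, fun y hy => hS y hy⟩

lemma canonAngle_le_pi_div_two {k : ℕ} (V W : Submodule ℝ (E k)) :
    canonAngle V W ≤ Real.pi / 2 :=
  Real.arccos_le_pi_div_two.2 <| Real.sInf_nonneg <| by rintro _ ⟨w, -, -, rfl⟩; positivity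

lemma arccos_norm_starProjection_le_canonAngle {k : ℕ} {V W : Submodule ℝ (E k)} {w : E k}
    (hw : w ∈ W) (hw1 : ‖w‖ = 1) : Real.arccos ‖V.starProjection w‖ ≤ canonAngle V W :=
  Real.arccos_le_arccos <| csInf_le ⟨0, by rintro _ ⟨_, -, -, rfl⟩; positivity⟩
    ⟨w, hw, hw1, by rw [Submodule.coe_orthogonalProjectionOnto_apply]⟩

lemma sSup_eq_pi_div_two_of_forall_arccos_le {s : Set ℝ} (hle : ∀ a ∈ s, a ≤ Real.pi / 2)
    (h : ∀ δ > 0, ∃ a ∈ s, Real.arccos δ ≤ a) : sSup s = Real.pi / 2 := by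
  refine csSup_eq_of_forall_le_of_forall_lt_exists_gt ((h 1 one_pos).imp fun _ => And.left) hle
    fun b hb => ?_
  have hlim : Tendsto Real.arccos (𝓝 0) (𝓝 (Real.pi / 2)) := by
    simpa using Real.continuous_arccos.tendsto 0
  obtain ⟨δ, hδ, hbδ⟩ := (hlim.eventually (lt_mem_nhds hb)).exists_gt
  obtain ⟨a, ha, hδa⟩ := h δ hδ
  exact ⟨a, ha, hbδ.trans_le hδa⟩

section Breakdown

variable {X Z : Matrix (Fin n) (Fin p) ℝ} {V : Matrix (Fin n) (Fin p) ℝ → Submodule ℝ (E m)}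

lemma BlockCorrupt.mono {k l k' l' : ℕ} (h : BlockCorrupt X Z k l) (hk : k ≤ k') (hk' : k' ≤ n)
    (hl : l ≤ l') (hl' : l' ≤ p) : BlockCorrupt X Z k' l' := by
  obtain ⟨I, J, rfl, rfl, hZ⟩ := h
  obtain ⟨I', hII', -, hI'⟩ := Finset.exists_subsuperset_card_eq (Finset.subset_univ I) hk
    (by simpa using hk')
  obtain ⟨J', hJJ', -, hJ'⟩ := Finset.exists_subsuperset_card_eq (Finset.subset_univ J) hl
    (by simpa using hl')
  exact ⟨I', J', hI', hJ', fun i j hij => hZ i j (hij.imp (mt (@hII' i)) (mt (@hJJ' j)))⟩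

lemma blockCorrupt_card_right_iff {k : ℕ} : BlockCorrupt X Z k p ↔ RowCorrupt X Z k := by
  constructor
  · rintro ⟨I, J, hI, -, hZ⟩
    exact ⟨I, hI, fun i hi j => hZ i j (.inl hi)⟩
  · rintro ⟨I, hI, hZ⟩
    refine ⟨I, Finset.univ, hI, by simp, fun i j hij => hZ i ?_ j⟩
    simpa using hij

lemma blockCorrupt_card_left_iff {l : ℕ} : BlockCorrupt X Z n l ↔ ColCorrupt X Z l := by
  constructor
  · rintro ⟨I, J, -, hJ, hZ⟩
    exact ⟨J, hJ, fun j hj i => hZ i j (.inr hj)⟩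
  · rintro ⟨J, hJ, hZ⟩
    refine ⟨Finset.univ, J, by simp, hJ, fun i j hij => hZ j ?_ i⟩
    simpa using hij

lemma breaksDownRow_iff_breaksDownBlock {k : ℕ} :
    BreaksDownRow V X k ↔ BreaksDownBlock V X k p := by
  simp only [BreaksDownRow, BreaksDownBlock, blockCorrupt_card_right_iff]

lemma breaksDownCol_iff_breaksDownBlock {l : ℕ} :
    BreaksDownCol V X l ↔ BreaksDownBlock V X n l := by
  simp only [BreaksDownCol, BreaksDownBlock, blockCorrupt_card_left_iff]

lemma BreaksDownBlock.mono {k l k' l' : ℕ} (h : BreaksDownBlock V X k l) (hk : k ≤ k')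
    (hk' : k' ≤ n) (hl : l ≤ l') (hl' : l' ≤ p) : BreaksDownBlock V X k' l' := by
  rw [BreaksDownBlock] at h ⊢
  set S := {d : ℝ | ∃ Z, BlockCorrupt X Z k l ∧ d = canonAngle (V Z) (V X)}
  set S' := {d : ℝ | ∃ Z, BlockCorrupt X Z k' l' ∧ d = canonAngle (V Z) (V X)}
  have hsub : S ⊆ S' := by
    rintro _ ⟨Z, hZ, rfl⟩
    exact ⟨Z, hZ.mono hk hk' hl hl', rfl⟩
  have hbdd : ∀ d ∈ S', d ≤ Real.pi / 2 := by
    rintro _ ⟨Z, -, rfl⟩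
    exact canonAngle_le_pi_div_two _ _
  have hne : S.Nonempty := Set.nonempty_iff_ne_empty.2 fun hS => by
    rw [hS, Real.sSup_empty] at h
    linarith [Real.pi_pos]
  exact le_antisymm (csSup_le (hne.mono hsub) hbdd)
    (h ▸ csSup_le_csSup ⟨_, hbdd⟩ hne hsub)

lemma exists_isBP_le_of_breaksDownBlock {k₀ : ℕ} (h : BreaksDownBlock V X k₀ 1) (hk₀ : 1 ≤ k₀)
    (hk₀n : k₀ ≤ n) (hp : 1 ≤ p) : ∃ k ≤ k₀, IsBP V X k 1 := by
  set K := {k | 1 ≤ k ∧ BreaksDownBlock V X k 1}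
  have hmem : k₀ ∈ K := ⟨hk₀, h⟩
  obtain ⟨hk, hbreak⟩ : sInf K ∈ K := Nat.sInf_mem ⟨k₀, hmem⟩
  have hle : sInf K ≤ k₀ := Nat.sInf_le hmem
  refine ⟨sInf K, hle, hk, hle.trans hk₀n, le_rfl, hp,
    fun k l hk hkn hl hlp => hbreak.mono hk hkn hl hlp, fun k l hk hl hkK hl1 hne hkl => ?_⟩
  obtain rfl : l = 1 := le_antisymm hl1 hl
  have : sInf K ≤ k := Nat.sInf_le (show k ∈ K from ⟨hk, hkl⟩)
  exact hne (by rw [le_antisymm hkK this])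

lemma bpCol_eq_one (h : BreaksDownCol V X 1) (hp : 1 ≤ p) : bpCol V X = 1 := by
  have hmem : 1 ∈ {l : ℕ | 1 ≤ l ∧ l ≤ p ∧ BreaksDownCol V X l} := ⟨le_rfl, hp, h⟩
  exact le_antisymm (Nat.sInf_le hmem) (Nat.sInf_mem ⟨1, hmem⟩).1

end Breakdown

section ELSVD

variable {R : ℕ} {ρ : Fin n → Fin p → ℝ → ℝ} {P1 : E n → ℝ} {P2 : E p → ℝ}
  {Y : Matrix (Fin n) (Fin p) ℝ} {d : Fin R → ℝ} {u : Fin R → E n} {v : Fin R → E p}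

lemma IsELSVD.orthonormal (h : IsELSVD ρ P1 P2 R Y d u v) : Orthonormal ℝ u := by
  classical
  rw [orthonormal_iff_ite]
  intro r s
  rcases lt_trichotomy r s with hrs | rfl | hsr
  · rw [if_neg hrs.ne]
    exact ((h s).2.2.2.1 r hrs).1
  · rw [if_pos rfl, real_inner_self_eq_norm_sq, (h r).2.1, one_pow]
  · rw [if_neg hsr.ne', real_inner_comm]
    exact ((h r).2.2.2.1 s hsr).1

lemma IsELSVD.elsvdObj_le (h : IsELSVD ρ P1 P2 R Y d u v) (hR : 0 < R) {d' : ℝ} {u' : E n}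
    {v' : E p} (hd' : 0 ≤ d') (hu' : ‖u'‖ = 1) (hv' : ‖v'‖ = 1) :
    elsvdObj ρ P1 P2 Y (d ⟨0, hR⟩) (u ⟨0, hR⟩) (v ⟨0, hR⟩) ≤ elsvdObj ρ P1 P2 Y d' u' v' :=
  (h ⟨0, hR⟩).2.2.2.2 d' u' v' hd' hu' hv' fun _ hs => absurd (Fin.lt_def.1 hs) (Nat.not_lt_zero _)

lemma IsELSVD.exists_le_add_penalty (h : IsELSVD ρ P1 P2 R Y d u v) (hR : 0 < R) :
    ∃ b, ∀ (u' : E n) (v' : E p), ‖u'‖ = 1 → ‖v'‖ = 1 → b ≤ P1 u' + P2 v' := by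
  refine ⟨elsvdObj ρ P1 P2 Y (d ⟨0, hR⟩) (u ⟨0, hR⟩) (v ⟨0, hR⟩) - ∑ i, ∑ j, ρ i j (Y i j),
    fun u' v' hu' hv' => ?_⟩
  have := h.elsvdObj_le hR le_rfl hu' hv'
  simp only [elsvdObj, zero_mul, sub_zero] at this ⊢
  linarith

lemma IsELSVD.le_elsvdObj_sub (hρ : ∀ i j z, 0 ≤ ρ i j z) (h : IsELSVD ρ P1 P2 R Y d u v)
    {b : ℝ} (hb : ∀ (u' : E n) (v' : E p), ‖u'‖ = 1 → ‖v'‖ = 1 → b ≤ P1 u' + P2 v')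
    (r : Fin R) (i : Fin n) (j : Fin p) :
    ρ i j (Y i j - d r * u r i * v r j) ≤ elsvdObj ρ P1 P2 Y (d r) (u r) (v r) - b := by
  have hsum : ρ i j (Y i j - d r * u r i * v r j) ≤
      ∑ i, ∑ j, ρ i j (Y i j - d r * u r i * v r j) :=
    (Finset.single_le_sum (f := fun j => ρ i j (Y i j - d r * u r i * v r j))
      (fun j _ => hρ i j _) (Finset.mem_univ j)).trans
      (Finset.single_le_sum (f := fun i => ∑ j, ρ i j (Y i j - d r * u r i * v r j))
        (fun i _ => Finset.sum_nonneg fun j _ => hρ i j _) (Finset.mem_univ i))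
  have := hb _ _ (h r).2.1 (h r).2.2.1
  rw [elsvdObj]
  linarith

lemma elsvdObj_add_smul_vecMulVec (M : ℝ) (c : E n) (e : E p) :
    elsvdObj ρ P1 P2 (Y + M • vecMulVec ⇑c ⇑e) M c e = elsvdObj ρ P1 P2 Y 0 c e := by
  simp only [elsvdObj, Matrix.add_apply, Matrix.smul_apply, vecMulVec_apply, smul_eq_mul]
  congr 3
  ext i
  congr 1
  ext j
  ring_nf

lemma exists_forall_isELSVD_spike_norm_le (hρ : ∀ i j z, 0 ≤ ρ i j z)
    (hρinf : ∀ i j, Tendsto (ρ i j) (cocompact ℝ) atTop) (hR : 0 < R) {b : ℝ}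
    (hb : ∀ (u' : E n) (v' : E p), ‖u'‖ = 1 → ‖v'‖ = 1 → b ≤ P1 u' + P2 v')
    (X : Matrix (Fin n) (Fin p) ℝ) {c : E n} (hc : ‖c‖ = 1) (j₀ : Fin p) :
    ∃ s : ℝ, 0 ≤ s ∧ ∀ M : ℝ, 0 ≤ M → ∀ d u v,
      IsELSVD ρ P1 P2 R (X + M • vecMulVec ⇑c ⇑(EuclideanSpace.single j₀ (1 : ℝ))) d u v →
      ‖(d ⟨0, hR⟩ * v ⟨0, hR⟩ j₀) • u ⟨0, hR⟩ - M • c‖ ≤ s := by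
  set e : E p := EuclideanSpace.single j₀ 1
  have he : ‖e‖ = 1 := by simp [e]
  obtain ⟨S, hS⟩ :=
    exists_norm_le_of_tendsto_cocompact (fun i => hρinf i j₀) (elsvdObj ρ P1 P2 X 0 c e - b)
  set x : E n := WithLp.toLp 2 fun i => X i j₀
  refine ⟨‖x‖ + max S 0, by positivity, fun M hM d u v h => ?_⟩
  set r₀ : Fin R := ⟨0, hR⟩
  set t := d r₀ * v r₀ j₀
  set y : E n := x + M • c - t • u r₀
  have hy : ‖y‖ ≤ S := hS y fun i => by
    have h1 := h.le_elsvdObj_sub hρ hb r₀ i j₀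
    have h2 := h.elsvdObj_le hR hM hc he
    rw [elsvdObj_add_smul_vecMulVec] at h2
    calc ρ i j₀ (y i) = ρ i j₀ ((X + M • vecMulVec ⇑c ⇑e) i j₀ - d r₀ * u r₀ i * v r₀ j₀) := by
          simp [y, x, t, e, vecMulVec_apply]
          ring_nf
      _ ≤ elsvdObj ρ P1 P2 (X + M • vecMulVec ⇑c ⇑e) (d r₀) (u r₀) (v r₀) - b := h1
      _ ≤ elsvdObj ρ P1 P2 X 0 c e - b := by linarith
  calc ‖t • u r₀ - M • c‖ = ‖x - y‖ := by congr 1; simp only [y]; abel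
    _ ≤ ‖x‖ + ‖y‖ := norm_sub_le _ _
    _ ≤ ‖x‖ + max S 0 := by linarith [le_max_left S 0]

variable (U : Matrix (Fin n) (Fin p) ℝ → Submodule ℝ (E n))

theorem exists_blockCorrupt_arccos_le_canonAngle (hR1 : 1 ≤ R) (hRn : R < n) (hp : 1 ≤ p)
    (hρ : ∀ i j z, 0 ≤ ρ i j z) (hρinf : ∀ i j, Tendsto (ρ i j) (cocompact ℝ) atTop)
    (hU : ∀ Y, ∃ (d : Fin R → ℝ) (u : Fin R → E n) (v : Fin R → E p),
      IsELSVD ρ P1 P2 R Y d u v ∧ U Y = Submodule.span ℝ (Set.range u))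
    (X : Matrix (Fin n) (Fin p) ℝ) {δ : ℝ} (hδ : 0 < δ) :
    ∃ Z, BlockCorrupt X Z (R + 1) 1 ∧ Real.arccos δ ≤ canonAngle (U Z) (U X) := by
  obtain ⟨dX, uX, vX, hX, hUX⟩ := hU X
  have hR : 0 < R := hR1
  have hdim : finrank ℝ (U X) = R := by
    rw [hUX, finrank_span_eq_card hX.orthonormal.linearIndependent, Fintype.card_fin]
  obtain ⟨I, -, hI⟩ :=
    Finset.exists_subset_card_eq (s := (Finset.univ : Finset (Fin n))) (n := R + 1)
      (by simpa using hRn)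
  obtain ⟨c, hcX, hc1, hcI⟩ :=
    exists_norm_eq_one_mem_orthogonal_of_support (K := U X) I (by rw [hdim, hI]; omega)
  obtain ⟨b, hb⟩ := hX.exists_le_add_penalty hR
  set j₀ : Fin p := ⟨0, hp⟩
  obtain ⟨s, hs0, hs⟩ := exists_forall_isELSVD_spike_norm_le hρ hρinf hR hb X hc1 j₀
  set M := s + s / δ + 1
  set Z := X + M • vecMulVec ⇑c ⇑(EuclideanSpace.single j₀ (1 : ℝ))
  have hZ : BlockCorrupt X Z (R + 1) 1 := by
    refine ⟨I, {j₀}, hI, Finset.card_singleton _, fun i j hij => ?_⟩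
    rcases hij with hi | hj
    · simp [Z, vecMulVec_apply, hcI i hi]
    · simp [Z, vecMulVec_apply, Finset.mem_singleton.not.1 hj]
  refine ⟨Z, hZ, ?_⟩
  obtain ⟨dZ, uZ, vZ, hZ', hUZ⟩ := hU Z
  obtain ⟨w, hwX, hw1, hproj⟩ :=
    exists_norm_starProjection_span_eq hZ'.orthonormal ⟨0, hR⟩ (W := U X) (by simp [hdim])
  have hsmall := abs_inner_le_of_norm_smul_sub_smul_le (hZ' ⟨0, hR⟩).2.1 hc1 hw1
    (Submodule.inner_left_of_mem_orthogonal hwX hcX) hδ (by linarith)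
    (hs M (by positivity) dZ uZ vZ hZ')
  calc Real.arccos δ ≤ Real.arccos ‖(U Z).starProjection w‖ := by
        rw [hUZ, hproj, Real.norm_eq_abs]
        exact Real.arccos_le_arccos hsmall
    _ ≤ canonAngle (U Z) (U X) := arccos_norm_starProjection_le_canonAngle hwX hw1

theorem breaksDownBlock_succ_one (hR1 : 1 ≤ R) (hRn : R < n) (hp : 1 ≤ p)
    (hρ : ∀ i j z, 0 ≤ ρ i j z) (hρinf : ∀ i j, Tendsto (ρ i j) (cocompact ℝ) atTop)
    (hU : ∀ Y, ∃ (d : Fin R → ℝ) (u : Fin R → E n) (v : Fin R → E p),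
      IsELSVD ρ P1 P2 R Y d u v ∧ U Y = Submodule.span ℝ (Set.range u))
    (X : Matrix (Fin n) (Fin p) ℝ) : BreaksDownBlock U X (R + 1) 1 :=
  sSup_eq_pi_div_two_of_forall_arccos_le
    (by rintro _ ⟨Z, -, rfl⟩; exact canonAngle_le_pi_div_two _ _) fun _ hδ =>
      let ⟨Z, hZ, hle⟩ := exists_blockCorrupt_arccos_le_canonAngle U hR1 hRn hp hρ hρinf hU X hδ
      ⟨_, ⟨Z, hZ, rfl⟩, hle⟩

end ELSVD

theorem stmt6_general {n p : ℕ} (R : ℕ) (hR1 : 1 ≤ R) (hRmin : R ≤ min n p) (hRn : R < n)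
    (ρ : Fin n → Fin p → ℝ → ℝ)
    (hρnonneg : ∀ i j z, 0 ≤ ρ i j z)
    (hρinf : ∀ i j, Filter.Tendsto (ρ i j) (Filter.cocompact ℝ) Filter.atTop)
    (P1 : E n → ℝ) (P2 : E p → ℝ)
    (U : Matrix (Fin n) (Fin p) ℝ → Submodule ℝ (E n))
    (hU : ∀ Y, ∃ (d : Fin R → ℝ) (u : Fin R → E n) (v : Fin R → E p),
      IsELSVD ρ P1 P2 R Y d u v ∧ U Y = Submodule.span ℝ (Set.range u))
    (X : Matrix (Fin n) (Fin p) ℝ) :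
    (∃ k ≤ R + 1, IsBP U X k 1) ∧
    bpRow U X ≤ R + 1 ∧ bpCol U X = 1 := by
  have hp : 1 ≤ p := hR1.trans (hRmin.trans (min_le_right n p))
  have hbreak := breaksDownBlock_succ_one U hR1 hRn hp hρnonneg hρinf hU X
  refine ⟨exists_isBP_le_of_breaksDownBlock hbreak (by omega) hRn hp, ?_, ?_⟩
  · exact Nat.sInf_le ⟨by omega, hRn,
      breaksDownRow_iff_breaksDownBlock.2 (hbreak.mono le_rfl hRn hp le_rfl)⟩
  · exact bpCol_eq_one (breaksDownCol_iff_breaksDownBlock.2 (hbreak.mono hRn le_rfl le_rfl hp)) hp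

/-- for the ELSVD left singular subspace function `U_R^ρ` (any selection of
minimizers), with each `ρ_ij` nonnegative, symmetric and diverging as `|z| → ∞`, and
penalties bounded above on the unit spheres, there is `k ≤ R+1` with `(k,1) ∈ BP(U_R^ρ;X)`;
in particular `bp_row(U_R^ρ;X) ≤ R+1` and `bp_col(U_R^ρ;X) = 1`. -/
theorem stmt6 {n p : ℕ} (R : ℕ) (hR1 : 1 ≤ R) (hRmin : R ≤ min n p) (hRn : R < n)
    (ρ : Fin n → Fin p → ℝ → ℝ)
    (hρnonneg : ∀ i j z, 0 ≤ ρ i j z)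
    (hρsymm : ∀ i j z, ρ i j (-z) = ρ i j z)
    (hρinf : ∀ i j, Filter.Tendsto (ρ i j) (Filter.cocompact ℝ) Filter.atTop)
    (P1 : E n → ℝ) (P2 : E p → ℝ)
    (hP1 : ∃ B1 : ℝ, ∀ u : E n, ‖u‖ = 1 → P1 u ≤ B1)
    (hP2 : ∃ B2 : ℝ, ∀ v : E p, ‖v‖ = 1 → P2 v ≤ B2)
    (U : Matrix (Fin n) (Fin p) ℝ → Submodule ℝ (E n))
    (hU : ∀ Y, ∃ (d : Fin R → ℝ) (u : Fin R → E n) (v : Fin R → E p),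
      IsELSVD ρ P1 P2 R Y d u v ∧ U Y = Submodule.span ℝ (Set.range u))
    (X : Matrix (Fin n) (Fin p) ℝ) :
    (∃ k ≤ R + 1, IsBP U X k 1) ∧
    bpRow U X ≤ R + 1 ∧ bpCol U X = 1 :=
  stmt6_general R hR1 hRmin hRn ρ hρnonneg hρinf P1 P2 U hU X
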